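/- Let k ≥ 1 and let k_1,…,k_n be positive integers with k_1 + ⋯ + k_n = 2k. Over candidates {A,B,C,D}, consider the incomplete weighted profile consisting of: one voter of weight 1 with fixed vote C>D>B>A, one voter of weight 2k−1 with fixed vote C>D>A>B, one voter of weight 2k−1 with fixed vote D>B>C>A, one voter of weight 2k_1 with fixed vote D>B>A>C, and for each i ∈ {2,…,n} a voter of weight 2k_i whose vote is constrained only to rank A above C. Then: (i) in every completion, A beats C in pairwise majority, D beats A in pairwise majority, and D beats B in pairwise majority; consequently, in every completion the winner of the cup rule with agenda ((A vs B), then C, then D) is either C or D; and (ii) there exists a completion under which D is the cup winner. -/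

import Mathlib

/-!
Every fixed voter ranks D above both A and B, for a total weight of `4k - 1 + 2k₁`, while the
constrained voters weigh only `4k - 2k₁` together; as `k₁ ≥ 1`, D beats A and B in every
completion. The second-round winner of the cup is A, B or C, so the overall winner is C or D.
The constraint A > C gives A a weight of `2k₁ + (4k - 2k₁) = 4k` against `4k - 1` for C.
If the constrained voters all vote A > B > C > D, then C also loses to B, so the second-round
winner is A or B, and D wins.
-/

namespace Stmt1

inductive Cand where
  | A | B | C | D
deriving DecidableEq

open Cand

/-- `above l x y` : in the vote given by list `l` (best candidate first),
`x` is ranked above `y`. -/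
def above (l : List Cand) (x y : Cand) : Prop := l.idxOf x < l.idxOf y

instance (l : List Cand) (x y : Cand) : Decidable (above l x y) :=
  inferInstanceAs (Decidable (_ < _))

/-- Total weight of voters ranking `x` above `y`.  The voter of index `i0`
has the fixed vote `D>B>A>C` of weight `2 * kk i0`; the completion `f` gives
the votes of the remaining constrained voters. -/
def N (k : ℕ) {n : ℕ} (kk : Fin n → ℕ) (i0 : Fin n) (f : Fin n → List Cand)
    (x y : Cand) : ℕ :=
  (if above [C, D, B, A] x y then 1 else 0)
  + (if above [C, D, A, B] x y then 2 * k - 1 else 0)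
  + (if above [D, B, C, A] x y then 2 * k - 1 else 0)
  + (if above [D, B, A, C] x y then 2 * kk i0 else 0)
  + ∑ i ∈ Finset.univ.erase i0, (if above (f i) x y then 2 * kk i else 0)

/-- Winner of the cup with agenda ((A vs B), then C, then D). -/
def cupWinner (N : Cand → Cand → ℕ) : Cand :=
  let w1 := if N A B > N B A then A else B
  let w2 := if N w1 C > N C w1 then w1 else C
  if N w2 D > N D w2 then w2 else D

def Beats (M : Cand → Cand → ℕ) (x y : Cand) : Prop := M x y > M y x

section Cup

variable {M : Cand → Cand → ℕ}

theorem cupWinner_eq_C_or_D (hDA : Beats M D A) (hDB : Beats M D B) :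
    cupWinner M = C ∨ cupWinner M = D := by
  unfold Beats at *
  simp only [cupWinner]
  split_ifs <;> simp_all <;> omega

theorem cupWinner_eq_D (hAC : Beats M A C) (hBC : Beats M B C) (hDA : Beats M D A)
    (hDB : Beats M D B) : cupWinner M = D := by
  unfold Beats at *
  simp only [cupWinner]
  split_ifs <;> simp_all <;> omega

end Cup

theorem above_asymm {l : List Cand} {x y : Cand} (h : above l x y) : ¬above l y x :=
  lt_asymm h

section Tally

variable {k n : ℕ} {kk : Fin n → ℕ} {i0 : Fin n}

def fixedTally (k w : ℕ) (x y : Cand) : ℕ :=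
  (if above [C, D, B, A] x y then 1 else 0)
  + (if above [C, D, A, B] x y then 2 * k - 1 else 0)
  + (if above [D, B, C, A] x y then 2 * k - 1 else 0)
  + (if above [D, B, A, C] x y then 2 * w else 0)

def freeTally (kk : Fin n → ℕ) (i0 : Fin n) (f : Fin n → List Cand) (x y : Cand) : ℕ :=
  ∑ i ∈ Finset.univ.erase i0, if above (f i) x y then 2 * kk i else 0

def freeWeight (kk : Fin n → ℕ) (i0 : Fin n) : ℕ :=
  ∑ i ∈ Finset.univ.erase i0, 2 * kk i

theorem N_eq_fixedTally_add_freeTally (f : Fin n → List Cand) (x y : Cand) :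
    N k kk i0 f x y = fixedTally k (kk i0) x y + freeTally kk i0 f x y :=
  rfl

theorem freeWeight_add (hsum : ∑ i, kk i = 2 * k) : freeWeight kk i0 + 2 * kk i0 = 4 * k := by
  rw [freeWeight, Finset.sum_erase_add _ _ (Finset.mem_univ i0), ← Finset.mul_sum, hsum]
  ring

theorem freeTally_le (f : Fin n → List Cand) (x y : Cand) :
    freeTally kk i0 f x y ≤ freeWeight kk i0 :=
  Finset.sum_le_sum fun i _ => by split_ifs <;> omega

theorem freeTally_eq_freeWeight {f : Fin n → List Cand} {x y : Cand}
    (hf : ∀ i, i ≠ i0 → above (f i) x y) : freeTally kk i0 f x y = freeWeight kk i0 :=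
  Finset.sum_congr rfl fun i hi => if_pos (hf i (Finset.ne_of_mem_erase hi))

theorem freeTally_eq_zero {f : Fin n → List Cand} {x y : Cand}
    (hf : ∀ i, i ≠ i0 → above (f i) x y) : freeTally kk i0 f y x = 0 :=
  Finset.sum_eq_zero fun i hi =>
    if_neg (above_asymm (hf i (Finset.ne_of_mem_erase hi)))

theorem beats_D (f : Fin n → List Cand) (hw : 1 ≤ kk i0) (hsum : ∑ i, kk i = 2 * k) {x : Cand}
    (hx : x = A ∨ x = B) : Beats (N k kk i0 f) D x := by
  have hfree := freeTally_le (kk := kk) (i0 := i0) f x D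
  have hweight := freeWeight_add (i0 := i0) hsum
  simp only [Beats, N_eq_fixedTally_add_freeTally]
  rcases hx with rfl | rfl <;> simp +decide only [fixedTally, ↓reduceIte] <;> omega

theorem beats_C {f : Fin n → List Cand} (hk : 1 ≤ k) (hsum : ∑ i, kk i = 2 * k) {x : Cand}
    (hx : x = A ∨ x = B) (hf : ∀ i, i ≠ i0 → above (f i) x C) : Beats (N k kk i0 f) x C := by
  have hweight := freeWeight_add (i0 := i0) hsum
  simp only [Beats, N_eq_fixedTally_add_freeTally, freeTally_eq_freeWeight hf,
    freeTally_eq_zero hf]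
  rcases hx with rfl | rfl <;> simp +decide only [fixedTally, ↓reduceIte] <;> omega

end Tally

theorem winner_is_C_or_D_and_D_possible
    (k n : ℕ) (hk : 1 ≤ k) (hn : 0 < n) (kk : Fin n → ℕ) (hpos : ∀ i, 1 ≤ kk i)
    (hsum : ∑ i, kk i = 2 * k) :
    ((∀ f : Fin n → List Cand,
        (∀ i, i ≠ (⟨0, hn⟩ : Fin n) →
            (f i).Perm [A, B, C, D] ∧ above (f i) A C) →
        (N k kk ⟨0, hn⟩ f A C > N k kk ⟨0, hn⟩ f C A ∧
         N k kk ⟨0, hn⟩ f D A > N k kk ⟨0, hn⟩ f A D ∧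
         N k kk ⟨0, hn⟩ f D B > N k kk ⟨0, hn⟩ f B D) ∧
        (cupWinner (N k kk ⟨0, hn⟩ f) = C ∨ cupWinner (N k kk ⟨0, hn⟩ f) = D))
      ∧
      (∃ f : Fin n → List Cand,
        (∀ i, i ≠ (⟨0, hn⟩ : Fin n) →
            (f i).Perm [A, B, C, D] ∧ above (f i) A C) ∧
        cupWinner (N k kk ⟨0, hn⟩ f) = D)) := by
  set i0 : Fin n := ⟨0, hn⟩
  have hw : 1 ≤ kk i0 := hpos i0
  have hAC : above [A, B, C, D] A C := by decide
  have hBC : above [A, B, C, D] B C := by decide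
  refine ⟨fun f hf => ?_, ⟨fun _ => [A, B, C, D], fun _ _ => ⟨List.Perm.refl _, hAC⟩, ?_⟩⟩
  · have hDA := beats_D f hw hsum (.inl rfl)
    have hDB := beats_D f hw hsum (.inr rfl)
    refine ⟨⟨beats_C hk hsum (.inl rfl) fun i hi => (hf i hi).2, hDA, hDB⟩, ?_⟩
    exact cupWinner_eq_C_or_D hDA hDB
  · exact cupWinner_eq_D (beats_C hk hsum (.inl rfl) fun _ _ => hAC)
      (beats_C hk hsum (.inr rfl) fun _ _ => hBC)
      (beats_D _ hw hsum (.inl rfl)) (beats_D _ hw hsum (.inr rfl))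

end Stmt1
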